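/- arXiv:1204.3309 — 3 statements merged into one kernel-verified Lean document; each statement's English description precedes it below -/
import Mathlib

section
/- Let G = (V,E) be a finite graph with vertex valence bounded by K, let p > 0, and let Γ be a family of edge-paths in G. Suppose τ:V→ℝ₊ satisfies Σ_{i=1}^{N-1} τ(z_i) ≥ 1 for every path γ = {(z_i,z_{i+1})}_{i=1}^{N-1} ∈ Γ. Then there exists τ̃:V→ℝ₊ such that (a) Σ_{i=1}^{N-1} min(τ̃*(z_i), τ̃*(z_{i+1})) ≥ 1 for every γ ∈ Γ, where τ̃*(x) = min{τ̃(y) : y adjacent to x or y = x}, and (b) Σ_{v∈V} τ̃(v)^p ≤ 2^p K² Σ_{v∈V} τ(v)^p. -/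
/-!
Take `τ̃(x) = max {2 τ(y) : y ∈ V₂(x)}`. If `z` and `z'` are adjacent, every `y` in the closed
neighbourhood of `z` or of `z'` has `z ∈ V₂(y)`, so `min (τ̃*(z)) (τ̃*(z')) ≥ 2 τ(z) ≥ τ(z)`, and summing
along a path of `Γ` gives admissibility. For the energy bound, `τ̃(x) = 2 τ(y(x))` for some
`y(x) ∈ V₂(x)`; as `V₂` is symmetric, every fibre of `y` lies in a ball `V₂(b)`, which has at most
`K²` vertices, so each `τ(b) ^ p` is counted at most `K²` times.
-/

/-- `starF Adj τ x` is the minimum of `τ` over the closed neighborhood of `x`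
(neighbors of `x` together with `x` itself). -/
noncomputable def starF {V : Type*} (Adj : V → V → Prop) (τ : V → ℝ) (x : V) : ℝ :=
  sInf {r : ℝ | ∃ y, (Adj x y ∨ y = x) ∧ r = τ y}

open Finset

theorem List.sum_map_dropLast_le_sum_map_zip_tail {α M : Type*} [AddCommMonoid M] [PartialOrder M]
    [IsOrderedAddMonoid M] {R : α → α → Prop} {f : α → M} (g : α → α → M)
    (hfg : ∀ a b, R a b → f a ≤ g a b) :
    ∀ {l : List α}, l.IsChain R → (l.dropLast.map f).sum ≤ ((l.zip l.tail).map fun q => g q.1 q.2).sum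
  | [], _ | [_], _ => by simp
  | a :: b :: l, h => by
    rw [List.isChain_cons_cons] at h
    simpa [List.dropLast_cons_cons] using
      add_le_add (hfg a b h.1) (sum_map_dropLast_le_sum_map_zip_tail g hfg h.2)

theorem Finset.sum_comp_le_nsmul_sum {ι M : Type*} [Fintype ι] [DecidableEq ι] [AddCommMonoid M]
    [PartialOrder M] [IsOrderedAddMonoid M] {f : ι → M} (hf : ∀ i, 0 ≤ f i) (g : ι → ι) {n : ℕ}
    (hg : ∀ j, #{i | g i = j} ≤ n) : ∑ i, f (g i) ≤ n • ∑ j, f j := by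
  rw [← Finset.sum_fiberwise univ g, Finset.smul_sum]
  refine Finset.sum_le_sum fun j _ => ?_
  calc ∑ i with g i = j, f (g i) = #{i | g i = j} • f j := by
        rw [Finset.sum_congr rfl fun i hi => by rw [(Finset.mem_filter.1 hi).2], Finset.sum_const]
    _ ≤ n • f j := nsmul_le_nsmul_left (hf j) (hg j)

namespace GraphModulus

variable {V : Type*} [Fintype V] [DecidableEq V] (Adj : V → V → Prop) [DecidableRel Adj]

def closedNbhd (x : V) : Finset V := {w | Adj x w ∨ w = x}

def ball2 (x : V) : Finset V := (closedNbhd Adj x).biUnion (closedNbhd Adj)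

variable {Adj}

theorem mem_closedNbhd {x w : V} : w ∈ closedNbhd Adj x ↔ Adj x w ∨ w = x := by
  simp [closedNbhd]

theorem self_mem_closedNbhd (x : V) : x ∈ closedNbhd Adj x := mem_closedNbhd.2 (Or.inr rfl)

theorem ncard_closedNbhd (x : V) : {w | Adj x w ∨ w = x}.ncard = #(closedNbhd Adj x) := by
  rw [← Set.ncard_coe_finset, closedNbhd, Finset.coe_filter_univ]

theorem mem_ball2 {x y : V} : y ∈ ball2 Adj x ↔ ∃ w ∈ closedNbhd Adj x, y ∈ closedNbhd Adj w :=
  Finset.mem_biUnion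

theorem self_mem_ball2 (x : V) : x ∈ ball2 Adj x :=
  mem_ball2.2 ⟨x, self_mem_closedNbhd x, self_mem_closedNbhd x⟩

theorem mem_closedNbhd_comm [Std.Symm Adj] {x y : V} :
    y ∈ closedNbhd Adj x ↔ x ∈ closedNbhd Adj y := by
  simp only [mem_closedNbhd]
  exact ⟨Or.imp symm Eq.symm, Or.imp symm Eq.symm⟩

theorem mem_ball2_comm [Std.Symm Adj] {x y : V} : y ∈ ball2 Adj x ↔ x ∈ ball2 Adj y := by
  simp only [mem_ball2, mem_closedNbhd_comm (x := x), mem_closedNbhd_comm (y := y)]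
  exact exists_congr fun w => And.comm

theorem card_ball2_le {K : ℕ} (hK : ∀ x, #(closedNbhd Adj x) ≤ K) (x : V) :
    #(ball2 Adj x) ≤ K ^ 2 :=
  calc #(ball2 Adj x) ≤ ∑ w ∈ closedNbhd Adj x, #(closedNbhd Adj w) := Finset.card_biUnion_le
    _ ≤ #(closedNbhd Adj x) * K := Finset.sum_le_card_nsmul _ _ _ fun w _ => hK w
    _ ≤ K ^ 2 := by rw [sq]; exact Nat.mul_le_mul_right K (hK x)

variable (Adj) in
def ball2Max (τ : V → ℝ) (x : V) : ℝ := (ball2 Adj x).sup' ⟨x, self_mem_ball2 x⟩ τ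

theorem le_ball2Max (τ : V → ℝ) {x y : V} (hy : y ∈ ball2 Adj x) : τ y ≤ ball2Max Adj τ x :=
  Finset.le_sup' τ hy

theorem le_starF {τ : V → ℝ} {c : ℝ} {x : V} (h : ∀ y ∈ closedNbhd Adj x, c ≤ τ y) :
    c ≤ starF Adj τ x := by
  refine le_csInf ⟨τ x, x, Or.inr rfl, rfl⟩ ?_
  rintro r ⟨y, hy, rfl⟩
  exact h y (mem_closedNbhd.2 hy)

theorem le_starF_ball2Max [Std.Symm Adj] (τ : V → ℝ) {z z' : V}
    (hz' : z' ∈ closedNbhd Adj z) : τ z ≤ starF Adj (ball2Max Adj τ) z' :=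
  le_starF fun _ hy => le_ball2Max τ <| mem_ball2_comm.1 <| mem_ball2.2 ⟨z', hz', hy⟩

theorem sum_ball2Max_rpow_le [Std.Symm Adj] {K : ℕ} (hK : ∀ x, #(closedNbhd Adj x) ≤ K)
    {τ : V → ℝ} (hτ : ∀ v, 0 ≤ τ v) (p : ℝ) :
    ∑ v, ball2Max Adj τ v ^ p ≤ (K : ℝ) ^ 2 * ∑ v, τ v ^ p := by
  choose y hy hτy using fun x => (ball2 Adj x).exists_mem_eq_sup' ⟨x, self_mem_ball2 x⟩ τ
  have hfiber (b : V) : #{x | y x = b} ≤ K ^ 2 := by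
    refine (Finset.card_le_card fun x hx => ?_).trans (card_ball2_le hK b)
    rw [← (Finset.mem_filter.1 hx).2, ← mem_ball2_comm]
    exact hy x
  simp only [ball2Max, hτy]
  exact_mod_cast (Finset.sum_comp_le_nsmul_sum (fun v => Real.rpow_nonneg (hτ v) p) y hfiber).trans_eq
    (nsmul_eq_mul _ _)

end GraphModulus

open GraphModulus in
theorem stmt_9_general {V : Type*} [Fintype V] (Adj : V → V → Prop) (hsymm : Symmetric Adj)
    (K : ℕ) (hval : ∀ v : V, {w | Adj v w ∨ w = v}.ncard ≤ K)
    (p : ℝ)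
    (Γ : Set (List V)) (hpath : ∀ γ ∈ Γ, γ.Chain' Adj)
    (τ : V → ℝ) (hτ : ∀ v, 0 ≤ τ v)
    (hadm : ∀ γ ∈ Γ, 1 ≤ (γ.dropLast.map τ).sum) :
    ∃ τt : V → ℝ, (∀ v, 0 ≤ τt v) ∧
      (∀ γ ∈ Γ, 1 ≤ ((γ.zip γ.tail).map
        (fun q => min (starF Adj τt q.1) (starF Adj τt q.2))).sum) ∧
      (∑ v, τt v ^ p) ≤ 2 ^ p * (K : ℝ) ^ 2 * ∑ v, τ v ^ p := by
  classical
  have : Std.Symm Adj := ⟨fun _ _ h => hsymm h⟩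
  have hK (x : V) : #(closedNbhd Adj x) ≤ K := ncard_closedNbhd (Adj := Adj) x ▸ hval x
  set σ : V → ℝ := fun v => 2 * τ v with hσ
  have hσ_nonneg (v : V) : 0 ≤ σ v := mul_nonneg zero_le_two (hτ v)
  set τt := ball2Max Adj σ
  refine ⟨τt, fun x => (hσ_nonneg x).trans (le_ball2Max σ (self_mem_ball2 x)), fun γ hγ => ?_, ?_⟩
  · refine (hadm γ hγ).trans <| List.sum_map_dropLast_le_sum_map_zip_tail
      (fun a b => min (starF Adj τt a) (starF Adj τt b)) (fun a b hab => ?_) (hpath γ hγ)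
    have hτσ : τ a ≤ σ a := by linarith [hτ a]
    exact le_min (hτσ.trans (le_starF_ball2Max σ (self_mem_closedNbhd a)))
      (hτσ.trans (le_starF_ball2Max σ (mem_closedNbhd.2 (Or.inl hab))))
  · calc ∑ v, τt v ^ p ≤ (K : ℝ) ^ 2 * ∑ v, σ v ^ p := sum_ball2Max_rpow_le hK hσ_nonneg p
      _ = 2 ^ p * (K : ℝ) ^ 2 * ∑ v, τ v ^ p := by
          simp only [hσ, Real.mul_rpow zero_le_two (hτ _), ← Finset.mul_sum]; ring

/-- Let `G` be a finite graph with valence (counting the vertex itself)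
bounded by `K`, `p > 0`, and `Γ` a family of edge-paths of `G`. If `τ : V → ℝ₊` satisfies
`Σ_{i=1}^{N-1} τ(z_i) ≥ 1` along every path of `Γ`, then there is `τ̃ : V → ℝ₊` with
`Σ min(τ̃*(z_i), τ̃*(z_{i+1})) ≥ 1` along every path of `Γ` and
`Σ_v τ̃(v)^p ≤ 2^p K² Σ_v τ(v)^p`. -/
theorem stmt_9 {V : Type*} [Fintype V] (Adj : V → V → Prop) (hsymm : Symmetric Adj)
    (K : ℕ) (hval : ∀ v : V, {w | Adj v w ∨ w = v}.ncard ≤ K)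
    (p : ℝ) (hp : 0 < p)
    (Γ : Set (List V)) (hpath : ∀ γ ∈ Γ, γ.Chain' Adj)
    (τ : V → ℝ) (hτ : ∀ v, 0 ≤ τ v)
    (hadm : ∀ γ ∈ Γ, 1 ≤ (γ.dropLast.map τ).sum) :
    ∃ τt : V → ℝ, (∀ v, 0 ≤ τt v) ∧
      (∀ γ ∈ Γ, 1 ≤ ((γ.zip γ.tail).map
        (fun q => min (starF Adj τt q.1) (starF Adj τt q.2))).sum) ∧
      (∑ v, τt v ^ p) ≤ 2 ^ p * (K : ℝ) ^ 2 * ∑ v, τ v ^ p :=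
  stmt_9_general Adj hsymm K hval p Γ hpath τ hτ hadm
end

section
/- Let X be a compact metric space admitting an Ahlfors regular distance of dimension α in its conformal gauge (so 𝒥_AR(X,d) ≠ ∅). Suppose additionally X is uniformly disconnected: there is C ≥ 1 such that for every x ∈ X and r > 0 there is a set A with B(x,r/C) ⊆ A ⊆ B(x,r) and dist(A, X∖A) ≥ r/C. Then for every p > 0 and every sufficiently large relative scale k, the path families Γ_{k,2}(B) in the nerves are empty for all B ∈ 𝒰; consequently M_p(2) = 0 for all p > 0 and the critical exponent Q_N = 0. -/
open scoped ENNReal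

/-- The `p`-combinatorial modulus of a family `Γ` of paths (lists of vertices), where
vertices at scale `m` are the elements of `centers m`. -/
noncomputable def nerveMod {X : Type*} [MetricSpace X]
    (centers : ℕ → Finset X) (m : ℕ) (p : ℝ) (Γ : Set (List X)) : ℝ≥0∞ :=
  sInf {v : ℝ≥0∞ | ∃ ρ : X → ℝ≥0∞,
    (∀ γ ∈ Γ, 1 ≤ (γ.map ρ).sum) ∧ v = ∑ z ∈ centers m, ρ z ^ p}

/-- `Γ_{k,L}(B)`: nerve paths at scale `|B| + k = i + k` from `B = B(x, κ b^{-i})`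
to the complement of `L·B`. -/
def nervePaths {X : Type*} [MetricSpace X] (centers : ℕ → Finset X)
    (Adj : ℕ → X → X → Prop) (κ b : ℝ) (i : ℕ) (x : X) (k : ℕ) (L : ℝ) :
    Set (List X) :=
  {γ : List X | γ ≠ [] ∧ γ.Chain' (Adj (i + k)) ∧ (∀ z ∈ γ, z ∈ centers (i + k)) ∧
    (∃ z₁, γ.head? = some z₁ ∧ z₁ ∈ Metric.ball x (κ * (b ^ i)⁻¹)) ∧
    (∃ zN, γ.getLast? = some zN ∧ zN ∉ Metric.ball x (L * κ * (b ^ i)⁻¹))}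

/-- `M_{p,k}(L)`: supremum over all `B ∈ 𝒰` of the modulus of `Γ_{k,L}(B)`. -/
noncomputable def Mpk {X : Type*} [MetricSpace X] (centers : ℕ → Finset X)
    (Adj : ℕ → X → X → Prop) (κ b : ℝ) (p : ℝ) (k : ℕ) (L : ℝ) : ℝ≥0∞ :=
  ⨆ (i : ℕ) (x : X) (_ : x ∈ centers i),
    nerveMod centers (i + k) p (nervePaths centers Adj κ b i x k L)

/-! A nerve edge at scale `|B| + k` has length less than `2λκ b^{-|B|-k}`, which is below the
separation gap `κ b^{-|B|} / C` of the uniformly disconnected piece around the first vertex of a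
path as soon as `b^k ≥ 2λC`. Such a path therefore never leaves that piece, which lies in `2·B`,
so `Γ_{k,L}(B)` is empty for `L ≥ 2`; the empty family has modulus `0`, witnessed by `ρ = 0`. -/

open Filter Metric

def UniformlyDisconnected (X : Type*) [MetricSpace X] (C : ℝ) : Prop :=
  ∀ (x : X) (r : ℝ), 0 < r → ∃ A : Set X,
    ball x (r / C) ⊆ A ∧ A ⊆ ball x r ∧ ∀ a ∈ A, ∀ w ∉ A, r / C ≤ dist a w

theorem UniformlyDisconnected.dist_lt_of_isChain {X : Type*} [MetricSpace X] {C r : ℝ}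
    (hUD : UniformlyDisconnected X C) (hC : 0 < C) (hr : 0 < r) {R : X → X → Prop}
    (hR : ∀ a w, R a w → dist a w < r / C) {z : X} {γ : List X} (hγ : γ.IsChain R)
    (hz : γ.head? = some z) : ∀ y ∈ γ, dist y z < r := by
  obtain ⟨A, hball, hAsub, hgap⟩ := hUD z r hr
  have hzA : z ∈ A := hball (mem_ball_self (div_pos hr hC))
  have hcarries : ∀ ⦃a w⦄, R a w → a ∈ A → w ∈ A := fun a w haw ha => by
    by_contra hw
    exact (hR a w haw).not_ge (hgap a ha w hw)
  obtain ⟨t, rfl⟩ := List.head?_eq_some_iff.mp hz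
  exact fun y hy => hAsub (hγ.induction (· ∈ A) _ hcarries (fun _ => hzA) y hy)

section Nerve

variable {X : Type*} [MetricSpace X] {centers : ℕ → Finset X} {Adj : ℕ → X → X → Prop}
  {κ b lam : ℝ}

theorem dist_lt_of_adj
    (hAdj : ∀ (m : ℕ) (x y : X), Adj m x y ↔ x ≠ y ∧
      (ball x (lam * κ * (b ^ m)⁻¹) ∩ ball y (lam * κ * (b ^ m)⁻¹)).Nonempty)
    {m : ℕ} {x y : X} (h : Adj m x y) : dist x y < 2 * (lam * κ * (b ^ m)⁻¹) := by
  rw [two_mul]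
  exact dist_lt_add_of_nonempty_ball_inter_ball ((hAdj m x y).mp h).2

theorem nervePaths_eq_empty {C L : ℝ} (hUD : UniformlyDisconnected X C) (hC : 0 < C)
    (hb : 0 < b)
    (hAdj : ∀ (m : ℕ) (x y : X), Adj m x y ↔ x ≠ y ∧
      (ball x (lam * κ * (b ^ m)⁻¹) ∩ ball y (lam * κ * (b ^ m)⁻¹)).Nonempty)
    {k : ℕ} (hk : 2 * lam * C ≤ b ^ k) (hL : 2 ≤ L) (i : ℕ) (x : X) :
    nervePaths centers Adj κ b i x k L = ∅ := by
  refine Set.eq_empty_of_forall_notMem ?_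
  rintro γ ⟨-, hγ, -, ⟨z, hz, hzB⟩, ⟨zN, hzN, hzNB⟩⟩
  set r := κ * (b ^ i)⁻¹
  have hr : 0 < r := pos_of_mem_ball hzB
  have hstep : ∀ a w, Adj (i + k) a w → dist a w < r / C := fun a w haw =>
    calc dist a w < 2 * (lam * κ * (b ^ (i + k))⁻¹) := dist_lt_of_adj hAdj haw
      _ = 2 * lam * C / b ^ k * (r / C) := by
        simp only [r, pow_add]; field_simp
      _ ≤ 1 * (r / C) := by
        gcongr
        exact div_le_one_of_le₀ hk (pow_pos hb k).le
      _ = r / C := one_mul _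
  have hzN_near : dist zN z < r :=
    hUD.dist_lt_of_isChain hC hr hstep hγ hz zN (List.mem_of_getLast? hzN)
  refine hzNB (mem_ball.mpr ?_)
  calc dist zN x ≤ dist zN z + dist z x := dist_triangle _ _ _
    _ < r + r := add_lt_add hzN_near (mem_ball.mp hzB)
    _ = 2 * r := (two_mul r).symm
    _ ≤ L * r := by gcongr
    _ = L * κ * (b ^ i)⁻¹ := by ring

theorem nerveMod_empty {m : ℕ} {p : ℝ} (hp : 0 < p) : nerveMod centers m p ∅ = 0 :=
  nonpos_iff_eq_zero.mp <| sInf_le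
    ⟨fun _ => 0, fun _ h => h.elim, by simp [ENNReal.zero_rpow_of_pos hp]⟩

theorem liminf_Mpk_eq_zero {p L : ℝ} (hp : 0 < p)
    (h : ∀ᶠ k in atTop, ∀ i, ∀ x ∈ centers i, nervePaths centers Adj κ b i x k L = ∅) :
    liminf (fun k => Mpk centers Adj κ b p k L) atTop = 0 := by
  refine (liminf_congr (h.mono fun k hk => ?_)).trans (liminf_const 0)
  refine nonpos_iff_eq_zero.mp (iSup₂_le fun i x => iSup_le fun hx => ?_)
  rw [hk i x hx, nerveMod_empty hp]

end Nerve

theorem stmt_17_general {X : Type*} [MetricSpace X]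
    -- the covering/nerve structure
    (centers : ℕ → Finset X) (Adj : ℕ → X → X → Prop)
    (κ b lam : ℝ) (hb : 1 < b)
    (hAdj : ∀ (m : ℕ) (x y : X), Adj m x y ↔ x ≠ y ∧
      (Metric.ball x (lam * κ * (b ^ m)⁻¹) ∩ Metric.ball y (lam * κ * (b ^ m)⁻¹)).Nonempty)
    -- uniform disconnectedness
    (C : ℝ) (hC : 1 ≤ C)
    (hUD : ∀ (x : X) (r : ℝ), 0 < r → ∃ A : Set X,
      Metric.ball x (r / C) ⊆ A ∧ A ⊆ Metric.ball x r ∧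
      ∀ a ∈ A, ∀ w ∉ A, r / C ≤ dist a w) :
    (∃ k₀ : ℕ, ∀ k, k₀ ≤ k → ∀ i : ℕ, ∀ x ∈ centers i,
      nervePaths centers Adj κ b i x k 2 = ∅) ∧
    (∀ p : ℝ, 0 < p →
      Filter.liminf (fun k => Mpk centers Adj κ b p k 2) Filter.atTop = 0) ∧
    sInf {p : ℝ | 0 < p ∧
      Filter.liminf (fun k => Mpk centers Adj κ b p k 2) Filter.atTop = 0} = 0 := by
  obtain ⟨k₀, hk₀⟩ : ∃ n : ℕ, 2 * lam * C < b ^ n := pow_unbounded_of_one_lt _ hb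
  have hempty : ∀ k, k₀ ≤ k → ∀ i : ℕ, ∀ x ∈ centers i,
      nervePaths centers Adj κ b i x k 2 = ∅ := fun k hk i x _ =>
    nervePaths_eq_empty hUD (by linarith) (by linarith) hAdj
      (hk₀.le.trans (pow_le_pow_right₀ hb.le hk)) le_rfl i x
  have hlim : ∀ p : ℝ, 0 < p →
      Filter.liminf (fun k => Mpk centers Adj κ b p k 2) Filter.atTop = 0 := fun p hp =>
    liminf_Mpk_eq_zero hp (eventually_atTop.mpr ⟨k₀, hempty⟩)
  refine ⟨⟨k₀, hempty⟩, hlim, ?_⟩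
  have hset : {p : ℝ | 0 < p ∧
      Filter.liminf (fun k => Mpk centers Adj κ b p k 2) Filter.atTop = 0} = Set.Ioi 0 :=
    Set.ext fun p => ⟨And.left, fun hp => ⟨hp, hlim p hp⟩⟩
  rw [hset, csInf_Ioi]

/-- Let `X` be a compact metric space whose AR conformal gauge is
nonempty (there is a distance `θ` on `X`, quasisymmetrically equivalent to `d`,
carrying an Ahlfors regular measure of dimension `α`), and suppose `X` is uniformly
disconnected with constant `C`. Then for every sufficiently large relative scale `k`
the path families `Γ_{k,2}(B)` of the nerves are empty for all `B ∈ 𝒰`; consequently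
`M_p(2) = liminf_k M_{p,k}(2) = 0` for all `p > 0`, and the critical exponent
`Q_N = inf{p > 0 : M_p(2) = 0}` is `0`. -/
theorem stmt_17 {X : Type*} [MetricSpace X] [CompactSpace X]
    [MeasurableSpace X] [BorelSpace X]
    -- the covering/nerve structure
    (centers : ℕ → Finset X) (Adj : ℕ → X → X → Prop)
    (κ b lam : ℝ) (hκ : 1 ≤ κ) (hb : 1 < b) (hlam : 1 ≤ lam)
    (hAdj : ∀ (m : ℕ) (x y : X), Adj m x y ↔ x ≠ y ∧
      (Metric.ball x (lam * κ * (b ^ m)⁻¹) ∩ Metric.ball y (lam * κ * (b ^ m)⁻¹)).Nonempty)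
    -- 𝒥_AR(X,d) ≠ ∅ : an Ahlfors regular distance θ of dimension α in the gauge
    (θ : X → X → ℝ) (α : ℝ) (hα : 0 < α)
    (hθ0 : ∀ x y, θ x y = 0 ↔ x = y) (hθs : ∀ x y, θ x y = θ y x)
    (hθt : ∀ x y z, θ x z ≤ θ x y + θ y z)
    (η : ℝ → ℝ) (hη : StrictMonoOn η (Set.Ici 0))
    (hqs : ∀ x y z : X, y ≠ z → θ x z / θ y z ≤ η (dist x z / dist y z))
    (μ : MeasureTheory.Measure X) (Kar : ℝ) (hKar : 1 ≤ Kar)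
    (hAR : ∀ (x : X) (r : ℝ), 0 < r → r ≤ sSup {t : ℝ | ∃ a b : X, t = θ a b} →
      ENNReal.ofReal (Kar⁻¹ * r ^ α) ≤ μ {y | θ x y < r} ∧
        μ {y | θ x y < r} ≤ ENNReal.ofReal (Kar * r ^ α))
    -- uniform disconnectedness
    (C : ℝ) (hC : 1 ≤ C)
    (hUD : ∀ (x : X) (r : ℝ), 0 < r → ∃ A : Set X,
      Metric.ball x (r / C) ⊆ A ∧ A ⊆ Metric.ball x r ∧
      ∀ a ∈ A, ∀ w ∉ A, r / C ≤ dist a w) :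
    (∃ k₀ : ℕ, ∀ k, k₀ ≤ k → ∀ i : ℕ, ∀ x ∈ centers i,
      nervePaths centers Adj κ b i x k 2 = ∅) ∧
    (∀ p : ℝ, 0 < p →
      Filter.liminf (fun k => Mpk centers Adj κ b p k 2) Filter.atTop = 0) ∧
    sInf {p : ℝ | 0 < p ∧
      Filter.liminf (fun k => Mpk centers Adj κ b p k 2) Filter.atTop = 0} = 0 :=
  stmt_17_general centers Adj κ b lam hb hAdj C hC hUD
end

section
/- Let (X,d) be compact and let θ be an Ahlfors regular distance of dimension q on X with id:(X,d)→(X,θ) η-quasisymmetric, with q-regular measure μ. Then there is a constant K ≥ 1, depending only on q, η and the regularity constant of μ, such that K⁻¹·(diam_θ B(x,r))^q ≤ μ(B(x,r)) ≤ K·(diam_θ B(x,r))^q for every d-ball B(x,r) with 0 < r ≤ diam X, where diam_θ denotes diameter in the metric θ. -/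
/-!
Uniform perfectness supplies in every ball `B(x, r)` a point `w` with `r / KP ≤ d(w, x) < r`.
Quasisymmetry then squeezes `B(x, r)` between the `θ`-balls about `x` of radii `θ(x, w) / η 1`
and `2 η(KP) θ(x, w)`, and its `θ`-diameter between `θ(x, w)` and `2 η(KP) θ(x, w)`, so Ahlfors
regularity applied to the two `θ`-balls gives both bounds. Radii beyond `diam_θ X` are covered by
the finiteness of `μ`: regularity forces `μ {x} = 0`, hence no point is `θ`-isolated, hence every
point has a `d`-neighbourhood of finite measure, and `X` is compact.
-/

open Metric Set MeasureTheory Filter Topology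

section

variable {X : Type*}

theorem Metric.nontrivial_of_diam_pos [MetricSpace X] {s : Set X} (h : 0 < diam s) :
    s.Nontrivial := by
  by_contra hs
  rw [not_nontrivial_iff] at hs
  simp [diam_subsingleton hs] at h

structure IsDistance (θ : X → X → ℝ) : Prop where
  eq_zero_iff : ∀ x y, θ x y = 0 ↔ x = y
  symm : ∀ x y, θ x y = θ y x
  triangle : ∀ x y z, θ x z ≤ θ x y + θ y z

namespace IsDistance

variable {θ : X → X → ℝ}

theorem self_eq_zero (hθ : IsDistance θ) (x : X) : θ x x = 0 :=
  (hθ.eq_zero_iff x x).2 rfl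

theorem nonneg (hθ : IsDistance θ) (x y : X) : 0 ≤ θ x y := by
  have h := hθ.triangle x y x
  rw [hθ.self_eq_zero, hθ.symm y x] at h
  linarith

theorem pos_of_ne (hθ : IsDistance θ) {x y : X} (h : x ≠ y) : 0 < θ x y :=
  (hθ.nonneg x y).lt_of_ne fun h' => h ((hθ.eq_zero_iff x y).1 h'.symm)

theorem le_two_mul_of_le (hθ : IsDistance θ) {x a b : X} {R : ℝ} (ha : θ x a ≤ R)
    (hb : θ x b ≤ R) : θ a b ≤ 2 * R := by
  have h := hθ.triangle a x b
  rw [hθ.symm a x] at h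
  linarith

end IsDistance

noncomputable def diamWith (θ : X → X → ℝ) (s : Set X) : ℝ :=
  sSup {t | ∃ a ∈ s, ∃ b ∈ s, t = θ a b}

section Diameter

variable {θ : X → X → ℝ} {s : Set X}

theorem IsDistance.bddAbove_of_forall_le (hθ : IsDistance θ) {x : X} {R : ℝ}
    (h : ∀ a ∈ s, θ x a ≤ R) : BddAbove {t | ∃ a ∈ s, ∃ b ∈ s, t = θ a b} :=
  ⟨2 * R, by rintro _ ⟨a, ha, b, hb, rfl⟩; exact hθ.le_two_mul_of_le (h a ha) (h b hb)⟩

theorem le_diamWith (hs : BddAbove {t | ∃ a ∈ s, ∃ b ∈ s, t = θ a b}) {a b : X} (ha : a ∈ s)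
    (hb : b ∈ s) : θ a b ≤ diamWith θ s :=
  le_csSup hs ⟨a, ha, b, hb, rfl⟩

theorem IsDistance.diamWith_nonneg (hθ : IsDistance θ) : 0 ≤ diamWith θ s :=
  Real.sSup_nonneg (by rintro _ ⟨a, -, b, -, rfl⟩; exact hθ.nonneg a b)

theorem IsDistance.diamWith_le_two_mul (hθ : IsDistance θ) {x : X} (hx : x ∈ s) {R : ℝ}
    (h : ∀ a ∈ s, θ x a ≤ R) : diamWith θ s ≤ 2 * R :=
  csSup_le ⟨_, x, hx, x, hx, rfl⟩ <| by
    rintro _ ⟨a, ha, b, hb, rfl⟩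
    exact hθ.le_two_mul_of_le (h a ha) (h b hb)

end Diameter

/-- The identity map `(X, dist) → (X, θ)` is `η`-quasisymmetric. -/
def IsQuasisymmetricId [MetricSpace X] (θ : X → X → ℝ) (η : ℝ → ℝ) : Prop :=
  ∀ x y z : X, y ≠ z → θ x z / θ y z ≤ η (dist x z / dist y z)

def IsUniformlyPerfect (X : Type*) [MetricSpace X] (K : ℝ) : Prop :=
  ∀ (x : X) (r : ℝ), 0 < r → r ≤ diam (univ : Set X) → (ball x r \ ball x (r / K)).Nonempty

section Quasisymmetric

variable [MetricSpace X] {θ : X → X → ℝ} {η : ℝ → ℝ}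

theorem IsUniformlyPerfect.exists_dist {K : ℝ} (h : IsUniformlyPerfect X K) (hK : 0 < K)
    (x : X) {r : ℝ} (hr : 0 < r) (hrΔ : r ≤ diam (univ : Set X)) :
    ∃ w, w ≠ x ∧ r ≤ K * dist w x ∧ dist w x < r := by
  obtain ⟨w, hw, hw'⟩ := h x r hr hrΔ
  have hrw : r / K ≤ dist w x := not_lt.1 hw'
  exact ⟨w, dist_pos.1 ((div_pos hr hK).trans_le hrw), (div_le_iff₀' hK).1 hrw, hw⟩

theorem IsQuasisymmetricId.le_mul (hqs : IsQuasisymmetricId θ η) (hθ : IsDistance θ)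
    (hη : MonotoneOn η (Ici 0)) {x w a : X} (hwx : w ≠ x) {t : ℝ}
    (ht : dist a x ≤ t * dist w x) : θ x a ≤ η t * θ x w := by
  have hd : dist a x / dist w x ≤ t := (div_le_iff₀ (dist_pos.2 hwx)).2 ht
  have hd₀ : 0 ≤ dist a x / dist w x := by positivity
  rw [hθ.symm x a, hθ.symm x w]
  calc θ a x = θ a x / θ w x * θ w x := (div_mul_cancel₀ _ (hθ.pos_of_ne hwx).ne').symm
    _ ≤ η (dist a x / dist w x) * θ w x :=
      mul_le_mul_of_nonneg_right (hqs a w x hwx) (hθ.nonneg w x)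
    _ ≤ η t * θ w x :=
      mul_le_mul_of_nonneg_right (hη hd₀ (hd₀.trans hd) hd) (hθ.nonneg w x)

theorem IsQuasisymmetricId.one_le (hqs : IsQuasisymmetricId θ η) (hθ : IsDistance θ)
    (hη : MonotoneOn η (Ici 0)) {x w : X} (hwx : w ≠ x) {t : ℝ} (ht : 1 ≤ t) : 1 ≤ η t := by
  have hθw := hθ.pos_of_ne hwx.symm
  have h := hqs.le_mul hθ hη hwx (a := w) (le_mul_of_one_le_left dist_nonneg ht)
  nlinarith

theorem IsQuasisymmetricId.setOf_lt_subset_ball (hqs : IsQuasisymmetricId θ η)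
    (hθ : IsDistance θ) (hη : MonotoneOn η (Ici 0)) {x w : X} {r : ℝ} (hw : dist w x < r) :
    {y | θ x y < θ x w / η 1} ⊆ ball x r := by
  intro y hy
  by_contra hyr
  have hry : r ≤ dist y x := not_lt.1 hyr
  have hyx : y ≠ x := dist_pos.1 (dist_nonneg.trans_lt (hw.trans_le hry))
  have h := hqs.le_mul hθ hη hyx (a := w) (t := 1) (by linarith)
  have hη₁ := hqs.one_le hθ hη hyx le_rfl
  have hy' : θ x y * η 1 < θ x w := (lt_div_iff₀ (by positivity)).1 hy
  linarith

theorem IsUniformlyPerfect.bddAbove_theta {K : ℝ} (hup : IsUniformlyPerfect X K)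
    (hqs : IsQuasisymmetricId θ η) (hθ : IsDistance θ) (hη : MonotoneOn η (Ici 0))
    (hK : 0 < K) (hΔ : 0 < diam (univ : Set X)) :
    BddAbove {t | ∃ a ∈ univ, ∃ b ∈ univ, t = θ a b} := by
  have hbdd : Bornology.IsBounded (univ : Set X) := by
    by_contra h
    simp [diam_eq_zero_of_unbounded h] at hΔ
  obtain ⟨x, -, -⟩ := nontrivial_of_diam_pos hΔ
  obtain ⟨w, hwx, hw, -⟩ := hup.exists_dist hK x hΔ le_rfl
  exact hθ.bddAbove_of_forall_le fun a _ =>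
    hqs.le_mul hθ hη hwx ((dist_le_diam_of_mem hbdd trivial trivial).trans hw)

end Quasisymmetric

def IsAhlforsRegular [MeasurableSpace X] (θ : X → X → ℝ) (μ : Measure X) (q K : ℝ) : Prop :=
  ∀ (x : X) (s : ℝ), 0 < s → s ≤ diamWith θ univ →
    ENNReal.ofReal (K⁻¹ * s ^ q) ≤ μ {y | θ x y < s} ∧
      μ {y | θ x y < s} ≤ ENNReal.ofReal (K * s ^ q)

namespace IsAhlforsRegular

variable [MeasurableSpace X] {θ : X → X → ℝ} {μ : Measure X} {q K : ℝ}

theorem measure_singleton (hμ : IsAhlforsRegular θ μ q K) (hθ : IsDistance θ) (hq : 0 < q)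
    (hD : 0 < diamWith θ univ) (x : X) : μ {x} = 0 := by
  have hlim : Tendsto (fun s : ℝ => ENNReal.ofReal (K * s ^ q)) (𝓝[>] 0) (𝓝 0) := by
    have h := ((Real.continuousAt_rpow_const 0 q (Or.inr hq.le)).const_mul K).tendsto
    rw [Real.zero_rpow hq.ne', mul_zero] at h
    simpa using ENNReal.tendsto_ofReal (h.mono_left nhdsWithin_le_nhds)
  have hev : ∀ᶠ s in 𝓝[>] (0 : ℝ), μ {x} ≤ ENNReal.ofReal (K * s ^ q) := by
    filter_upwards [Ioo_mem_nhdsGT hD] with s hs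
    refine (measure_mono ?_).trans (hμ x s hs.1 hs.2.le).2
    simpa [hθ.self_eq_zero] using hs.1
  exact nonpos_iff_eq_zero.1 (ge_of_tendsto hlim hev)

theorem exists_ne_lt (hμ : IsAhlforsRegular θ μ q K) (hθ : IsDistance θ) (hq : 0 < q)
    (hK : 0 < K) (hD : 0 < diamWith θ univ) (x : X) {s : ℝ} (hs : 0 < s)
    (hsD : s ≤ diamWith θ univ) : ∃ y, y ≠ x ∧ θ x y < s := by
  by_contra! h
  have hsub : {y | θ x y < s} ⊆ {x} := fun y hy => by_contra fun hyx => (h y hyx).not_gt hy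
  have hle := (hμ x s hs hsD).1.trans (measure_mono hsub)
  rw [hμ.measure_singleton hθ hq hD x, nonpos_iff_eq_zero, ENNReal.ofReal_eq_zero] at hle
  have : 0 < K⁻¹ * s ^ q := by positivity
  linarith

theorem exists_ball_subset [MetricSpace X] {η : ℝ → ℝ} (hμ : IsAhlforsRegular θ μ q K)
    (hθ : IsDistance θ) (hqs : IsQuasisymmetricId θ η) (hη : MonotoneOn η (Ici 0)) (hq : 0 < q)
    (hK : 0 < K) (hD : 0 < diamWith θ univ) (x : X) :
    ∃ δ > 0, ball x δ ⊆ {y | θ x y < diamWith θ univ} := by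
  obtain ⟨y₀, hy₀, -⟩ := hμ.exists_ne_lt hθ hq hK hD x hD le_rfl
  have hη₁ : 1 ≤ η 1 := hqs.one_le hθ hη hy₀ le_rfl
  obtain ⟨y, hyx, hy⟩ := hμ.exists_ne_lt hθ hq hK hD x (div_pos hD (one_pos.trans_le hη₁))
    (div_le_self hD.le hη₁)
  refine ⟨dist y x, dist_pos.2 hyx, fun z hz => ?_⟩
  have h := hqs.le_mul hθ hη hyx (a := z) (t := 1) (by rw [one_mul]; exact (mem_ball.1 hz).le)
  rw [lt_div_iff₀ (one_pos.trans_le hη₁)] at hy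
  show θ x z < _
  linarith

theorem isLocallyFiniteMeasure [MetricSpace X] {η : ℝ → ℝ} (hμ : IsAhlforsRegular θ μ q K)
    (hθ : IsDistance θ) (hqs : IsQuasisymmetricId θ η) (hη : MonotoneOn η (Ici 0)) (hq : 0 < q)
    (hK : 0 < K) (hD : 0 < diamWith θ univ) : IsLocallyFiniteMeasure μ := by
  refine ⟨fun x => ?_⟩
  obtain ⟨δ, hδ, hsub⟩ := hμ.exists_ball_subset hθ hqs hη hq hK hD x
  exact ⟨ball x δ, ball_mem_nhds x hδ,
    (measure_mono hsub).trans_lt ((hμ x _ hD le_rfl).2.trans_lt ENNReal.ofReal_lt_top)⟩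

theorem exists_measure_le [IsFiniteMeasure μ] (hμ : IsAhlforsRegular θ μ q K) (hq : 0 < q)
    (hK : 0 ≤ K) (hD : 0 < diamWith θ univ) :
    ∃ C, 0 ≤ C ∧ ∀ (x : X) (s : ℝ), 0 < s → μ {y | θ x y < s} ≤ ENNReal.ofReal (C * s ^ q) := by
  set D := diamWith θ univ
  refine ⟨max K (μ.real univ / D ^ q), le_max_of_le_left hK, fun x s hs => ?_⟩
  have hmono : ∀ C, C ≤ max K (μ.real univ / D ^ q) →
      ENNReal.ofReal (C * s ^ q) ≤ ENNReal.ofReal (max K (μ.real univ / D ^ q) * s ^ q) :=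
    fun C hC => ENNReal.ofReal_le_ofReal (by gcongr)
  rcases le_or_gt s D with hsD | hDs
  · exact (hμ x s hs hsD).2.trans (hmono K (le_max_left _ _))
  refine (measure_mono (subset_univ _)).trans (le_trans ?_ (hmono _ (le_max_right _ _)))
  rw [← ofReal_measureReal]
  refine ENNReal.ofReal_le_ofReal ?_
  have hDs' : D ^ q ≤ s ^ q := Real.rpow_le_rpow hD.le hDs.le hq.le
  rw [div_mul_eq_mul_div, le_div_iff₀ (by positivity)]
  exact mul_le_mul_of_nonneg_left hDs' measureReal_nonneg

end IsAhlforsRegular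

section BallBounds

variable [MetricSpace X] [MeasurableSpace X] {θ : X → X → ℝ} {η : ℝ → ℝ} {μ : Measure X}
  {q : ℝ} {x w : X} {r L : ℝ}

theorem IsAhlforsRegular.ofReal_le_measure_ball {K : ℝ} (hμ : IsAhlforsRegular θ μ q K)
    (hθ : IsDistance θ) (hqs : IsQuasisymmetricId θ η) (hη : MonotoneOn η (Ici 0)) (hq : 0 < q)
    (hK : 0 ≤ K) (hbdd : BddAbove {t | ∃ a ∈ univ, ∃ b ∈ univ, t = θ a b}) (hwx : w ≠ x)
    (hw : r ≤ L * dist w x) (hwr : dist w x < r) :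
    ENNReal.ofReal ((K * (2 * η L * η 1) ^ q)⁻¹ * diamWith θ (ball x r) ^ q) ≤ μ (ball x r) := by
  have hL : 1 ≤ L := by
    by_contra! h
    nlinarith [dist_pos.2 hwx]
  have ht : 0 < θ x w := hθ.pos_of_ne hwx.symm
  have hη₁ := hqs.one_le hθ hη hwx le_rfl
  have hηL := hqs.one_le hθ hη hwx hL
  have hdiam : diamWith θ (ball x r) ≤ 2 * (η L * θ x w) :=
    hθ.diamWith_le_two_mul (mem_ball_self (dist_nonneg.trans_lt hwr)) fun a ha =>
      hqs.le_mul hθ hη hwx ((mem_ball.1 ha).le.trans hw)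
  have hs : θ x w / η 1 ≤ diamWith θ univ :=
    (div_le_self ht.le hη₁).trans (le_diamWith hbdd trivial trivial)
  refine le_trans ?_ ((hμ x _ (by positivity) hs).1.trans
    (measure_mono (hqs.setOf_lt_subset_ball hθ hη hwr)))
  refine ENNReal.ofReal_le_ofReal ?_
  have hc : 0 < 2 * η L * η 1 := by positivity
  have hle : diamWith θ (ball x r) / (2 * η L * η 1) ≤ θ x w / η 1 := by
    rw [div_le_div_iff₀ hc (by positivity)]
    calc diamWith θ (ball x r) * η 1 ≤ 2 * (η L * θ x w) * η 1 := by gcongr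
      _ = θ x w * (2 * η L * η 1) := by ring
  calc (K * (2 * η L * η 1) ^ q)⁻¹ * diamWith θ (ball x r) ^ q
      = K⁻¹ * (diamWith θ (ball x r) / (2 * η L * η 1)) ^ q := by
        rw [mul_inv, Real.div_rpow hθ.diamWith_nonneg hc.le]; ring
    _ ≤ K⁻¹ * (θ x w / η 1) ^ q := by
        have := hθ.diamWith_nonneg (s := ball x r)
        gcongr

theorem IsQuasisymmetricId.measure_ball_le (hqs : IsQuasisymmetricId θ η) (hθ : IsDistance θ)
    (hη : MonotoneOn η (Ici 0)) (hq : 0 < q) {C : ℝ} (hC₀ : 0 ≤ C)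
    (hC : ∀ (x : X) (s : ℝ), 0 < s → μ {y | θ x y < s} ≤ ENNReal.ofReal (C * s ^ q))
    (hwx : w ≠ x) (hw : r ≤ L * dist w x) (hwr : dist w x < r) :
    μ (ball x r) ≤ ENNReal.ofReal (C * (2 * η L) ^ q * diamWith θ (ball x r) ^ q) := by
  have hL : 1 ≤ L := by
    by_contra! h
    nlinarith [dist_pos.2 hwx]
  have ht : 0 < θ x w := hθ.pos_of_ne hwx.symm
  have hηL := hqs.one_le hθ hη hwx hL
  have hball : ∀ a ∈ ball x r, θ x a ≤ η L * θ x w := fun a ha =>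
    hqs.le_mul hθ hη hwx ((mem_ball.1 ha).le.trans hw)
  have hbdd := hθ.bddAbove_of_forall_le hball
  have hsub : ball x r ⊆ {y | θ x y < 2 * η L * θ x w} := fun a ha => by
    have := hball a ha
    show θ x a < _
    nlinarith
  refine (measure_mono hsub).trans ((hC x _ (by positivity)).trans (ENNReal.ofReal_le_ofReal ?_))
  have htD : θ x w ≤ diamWith θ (ball x r) :=
    le_diamWith hbdd (mem_ball_self (dist_nonneg.trans_lt hwr)) (mem_ball.2 hwr)
  rw [Real.mul_rpow (by positivity) ht.le, ← mul_assoc]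
  gcongr

end BallBounds

theorem IsAhlforsRegular.exists_measure_ball_comparable [MetricSpace X] [CompactSpace X]
    [MeasurableSpace X] {θ : X → X → ℝ} {η : ℝ → ℝ} {μ : Measure X} {q K₀ KP : ℝ}
    (hμ : IsAhlforsRegular θ μ q K₀) (hθ : IsDistance θ) (hqs : IsQuasisymmetricId θ η)
    (hη : MonotoneOn η (Ici 0)) (hup : IsUniformlyPerfect X KP) (hKP : 1 < KP) (hq : 0 < q)
    (hK₀ : 0 < K₀) (hΔ : 0 < diam (univ : Set X)) :
    ∃ K : ℝ, 1 ≤ K ∧ ∀ (x : X) (r : ℝ), 0 < r → r ≤ diam (univ : Set X) →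
      ENNReal.ofReal (K⁻¹ * diamWith θ (ball x r) ^ q) ≤ μ (ball x r) ∧
        μ (ball x r) ≤ ENNReal.ofReal (K * diamWith θ (ball x r) ^ q) := by
  have hKP₀ : 0 < KP := one_pos.trans hKP
  have hbdd := hup.bddAbove_theta hqs hθ hη hKP₀ hΔ
  obtain ⟨x₀, -, y₀, -, hxy⟩ := nontrivial_of_diam_pos hΔ
  have hD : 0 < diamWith θ univ :=
    (hθ.pos_of_ne hxy).trans_le (le_diamWith hbdd trivial trivial)
  have : IsLocallyFiniteMeasure μ := hμ.isLocallyFiniteMeasure hθ hqs hη hq hK₀ hD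
  obtain ⟨C, hC₀, hC⟩ := hμ.exists_measure_le hq hK₀.le hD
  have hη₁ := hqs.one_le hθ hη hxy le_rfl
  have hηKP := hqs.one_le hθ hη hxy hKP.le
  set A := K₀ * (2 * η KP * η 1) ^ q
  set B := C * (2 * η KP) ^ q
  have hA : 0 < A := by positivity
  refine ⟨max 1 (max A B), le_max_left _ _, fun x r hr hrΔ => ?_⟩
  obtain ⟨w, hwx, hw, hwr⟩ := hup.exists_dist hKP₀ x hr hrΔ
  constructor
  · refine le_trans (ENNReal.ofReal_le_ofReal ?_)
      (hμ.ofReal_le_measure_ball hθ hqs hη hq hK₀.le hbdd hwx hw hwr)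
    have := Real.rpow_nonneg (hθ.diamWith_nonneg (s := ball x r)) q
    exact mul_le_mul_of_nonneg_right (inv_anti₀ hA (le_max_of_le_right (le_max_left _ _))) this
  · refine (hqs.measure_ball_le hθ hη hq hC₀ hC hwx hw hwr).trans
      (ENNReal.ofReal_le_ofReal ?_)
    exact mul_le_mul_of_nonneg_right (le_max_of_le_right (le_max_right _ _))
      (Real.rpow_nonneg hθ.diamWith_nonneg q)

end

theorem stmt_19_general {X : Type*} [MetricSpace X] [CompactSpace X]
    [MeasurableSpace X]
    (θ : X → X → ℝ)
    (hθ0 : ∀ x y, θ x y = 0 ↔ x = y) (hθs : ∀ x y, θ x y = θ y x)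
    (hθt : ∀ x y z, θ x z ≤ θ x y + θ y z)
    (η : ℝ → ℝ) (hη : StrictMonoOn η (Set.Ici 0))
    (hqs : ∀ x y z : X, y ≠ z → θ x z / θ y z ≤ η (dist x z / dist y z))
    (KP : ℝ) (hKP : 1 < KP)
    (hup : ∀ (x : X) (r : ℝ), 0 < r → r ≤ Metric.diam (Set.univ : Set X) →
      (Metric.ball x r \ Metric.ball x (r / KP)).Nonempty)
    (μ : MeasureTheory.Measure X) (q : ℝ) (hq : 0 < q)
    (K₀ : ℝ) (hK₀ : 1 ≤ K₀)
    (hreg : ∀ (x : X) (s : ℝ), 0 < s → s ≤ sSup {t : ℝ | ∃ a b : X, t = θ a b} →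
      ENNReal.ofReal (K₀⁻¹ * s ^ q) ≤ μ {y | θ x y < s} ∧
        μ {y | θ x y < s} ≤ ENNReal.ofReal (K₀ * s ^ q)) :
    ∃ K : ℝ, 1 ≤ K ∧ ∀ (x : X) (r : ℝ), 0 < r →
      r ≤ Metric.diam (Set.univ : Set X) →
      ENNReal.ofReal (K⁻¹ *
          (sSup {t : ℝ | ∃ a ∈ Metric.ball x r, ∃ b ∈ Metric.ball x r, t = θ a b}) ^ q)
        ≤ μ (Metric.ball x r) ∧
      μ (Metric.ball x r) ≤ ENNReal.ofReal (K *
          (sSup {t : ℝ | ∃ a ∈ Metric.ball x r, ∃ b ∈ Metric.ball x r, t = θ a b}) ^ q) := by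
  rcases le_or_gt (diam (univ : Set X)) 0 with hΔ | hΔ
  · exact ⟨1, le_rfl, fun x r hr hrΔ => absurd (hr.trans_le hrΔ) hΔ.not_gt⟩
  have hμ : IsAhlforsRegular θ μ q K₀ := fun x s hs hsD =>
    hreg x s hs (by simpa [diamWith] using hsD)
  exact hμ.exists_measure_ball_comparable ⟨hθ0, hθs, hθt⟩ hqs hη.monotoneOn hup hKP hq
    (one_pos.trans_le hK₀) hΔ

/-- Let `(X,d)` be compact and uniformly perfect, let `θ` be an Ahlfors
regular distance of dimension `q` on `X` (with `q`-regular measure `μ`) such that the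
identity `(X,d) → (X,θ)` is `η`-quasisymmetric. Then there is `K ≥ 1`, depending only
on `q`, `η` and the regularity constant of `μ`, such that
`K⁻¹·(diam_θ B(x,r))^q ≤ μ(B(x,r)) ≤ K·(diam_θ B(x,r))^q`
for every `d`-ball `B(x,r)` with `0 < r ≤ diam X`. -/
theorem stmt_19 {X : Type*} [MetricSpace X] [CompactSpace X]
    [MeasurableSpace X] [BorelSpace X]
    (θ : X → X → ℝ)
    (hθ0 : ∀ x y, θ x y = 0 ↔ x = y) (hθs : ∀ x y, θ x y = θ y x)
    (hθt : ∀ x y z, θ x z ≤ θ x y + θ y z)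
    (η : ℝ → ℝ) (hη : StrictMonoOn η (Set.Ici 0))
    (hqs : ∀ x y z : X, y ≠ z → θ x z / θ y z ≤ η (dist x z / dist y z))
    (KP : ℝ) (hKP : 1 < KP)
    (hup : ∀ (x : X) (r : ℝ), 0 < r → r ≤ Metric.diam (Set.univ : Set X) →
      (Metric.ball x r \ Metric.ball x (r / KP)).Nonempty)
    (μ : MeasureTheory.Measure X) (q : ℝ) (hq : 0 < q)
    (K₀ : ℝ) (hK₀ : 1 ≤ K₀)
    (hreg : ∀ (x : X) (s : ℝ), 0 < s → s ≤ sSup {t : ℝ | ∃ a b : X, t = θ a b} →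
      ENNReal.ofReal (K₀⁻¹ * s ^ q) ≤ μ {y | θ x y < s} ∧
        μ {y | θ x y < s} ≤ ENNReal.ofReal (K₀ * s ^ q)) :
    ∃ K : ℝ, 1 ≤ K ∧ ∀ (x : X) (r : ℝ), 0 < r →
      r ≤ Metric.diam (Set.univ : Set X) →
      ENNReal.ofReal (K⁻¹ *
          (sSup {t : ℝ | ∃ a ∈ Metric.ball x r, ∃ b ∈ Metric.ball x r, t = θ a b}) ^ q)
        ≤ μ (Metric.ball x r) ∧
      μ (Metric.ball x r) ≤ ENNReal.ofReal (K *
          (sSup {t : ℝ | ∃ a ∈ Metric.ball x r, ∃ b ∈ Metric.ball x r, t = θ a b}) ^ q) :=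
  stmt_19_general θ hθ0 hθs hθt η hη hqs KP hKP hup μ q hq K₀ hK₀ hreg
end
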